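/- Let f be a continuous, strictly unimodal density on [0,1] whose mode ω satisfies F(ω) > 1 − α/2 (a right-skew condition), with 0 < α < 1/2. Then the equal-tailed interval (F⁻¹(α/2), F⁻¹(1−α/2)) is strictly longer than the HPD interval, i.e., is not the shortest interval with probability content 1 − α. -/
import Mathlib


open Set

/-- **Equal-tailed intervals are suboptimal for skewed densities.** Let `f` be a
continuous, strictly unimodal density on `[0,1]` whose mode `ω` satisfies
`F ω > 1 - α/2` (right skew), with `0 < α < 1/2`. Then the equal-tailed interval
`(F⁻¹(α/2), F⁻¹(1-α/2))` is strictly longer than some interval with the same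
probability content `1-α`, hence is not the HPD interval. -/
theorem equal_tailed_not_shortest_of_skewed
    (f F : ℝ → ℝ) (α : ℝ) (hα : 0 < α ∧ α < 1/2)
    (hcont : ContinuousOn f (Icc 0 1))
    (hnn : ∀ x ∈ Icc (0:ℝ) 1, 0 ≤ f x)
    (hprob : (∫ x in (0:ℝ)..1, f x) = 1)
    (ω : ℝ) (hω : ω ∈ Ioo (0:ℝ) 1)
    (hmono : StrictMonoOn f (Icc 0 ω)) (hanti : StrictAntiOn f (Icc ω 1))
    (hF : ∀ x, F x = ∫ t in (0:ℝ)..x, f t)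
    (hskew : F ω > 1 - α / 2)
    (qlow qup : ℝ) (hqlowmem : qlow ∈ Icc (0:ℝ) 1) (hqupmem : qup ∈ Icc (0:ℝ) 1)
    (hqlow : F qlow = α / 2) (hqup : F qup = 1 - α / 2) :
    ∃ l u : ℝ, 0 ≤ l ∧ l < u ∧ u ≤ 1 ∧ F u - F l = 1 - α ∧
      u - l < qup - qlow := by
  obtain ⟨hα0, hα2⟩ := hα
  obtain ⟨hq0, hq1⟩ := hqlowmem
  obtain ⟨hu0, hu1⟩ := hqupmem
  obtain ⟨hω0, hω1⟩ := hω
  -- integrability on subintervals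
  have hint : ∀ a b : ℝ, 0 ≤ a → b ≤ 1 → a ≤ b →
      IntervalIntegrable f MeasureTheory.volume a b := fun a b ha hb hab =>
    (hcont.mono (Icc_subset_Icc ha hb)).intervalIntegrable_of_Icc hab
  have hFdiff : ∀ x y : ℝ, 0 ≤ x → x ≤ y → y ≤ 1 → F y - F x = ∫ t in x..y, f t := by
    intro x y hx hxy hy
    rw [hF, hF]
    exact intervalIntegral.integral_interval_sub_left
      (hint 0 y le_rfl hy (hx.trans hxy)) (hint 0 x le_rfl (hxy.trans hy) hx)
  have hFmono : ∀ x y : ℝ, 0 ≤ x → x ≤ y → y ≤ 1 → F x ≤ F y := by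
    intro x y hx hxy hy
    have h1 := hFdiff x y hx hxy hy
    have h2 : 0 ≤ ∫ t in x..y, f t :=
      intervalIntegral.integral_nonneg hxy
        (fun u hu => hnn u ⟨hx.trans hu.1, hu.2.trans hy⟩)
    linarith
  -- qup < ω
  have hqupω : qup < ω := by
    by_contra h
    push_neg at h
    have := hFmono ω qup hω0.le h hu1
    linarith
  -- qlow < qup
  have hlq : qlow < qup := by
    by_contra h
    push_neg at h
    have := hFmono qup qlow hu0 h hq1
    linarith
  set ε : ℝ := (ω - qup) / 2 with hε
  have hεpos : 0 < ε := by simp [hε]; linarith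
  have hbω : qup + ε < ω := by simp [hε]; linarith
  set l : ℝ := qlow + ε with hl
  set b : ℝ := qup + ε with hb
  have hl0 : 0 ≤ l := by simp [hl]; linarith
  have hb1 : b ≤ 1 := by simp [hb]; linarith
  have hlb : l < b := by simp [hl, hb]; linarith
  -- the key strict inequality: shifting right gains mass
  have key : F l - F qlow < F b - F qup := by
    have h1 : F l - F qlow = ∫ t in (0:ℝ)..ε, f (t + qlow) := by
      rw [hFdiff qlow l hq0 (by linarith) (by linarith),
        intervalIntegral.integral_comp_add_right f qlow, zero_add, add_comm ε qlow, ← hl]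
    have h2 : F b - F qup = ∫ t in (0:ℝ)..ε, f (t + qup) := by
      rw [hFdiff qup b hu0 (by linarith) hb1,
        intervalIntegral.integral_comp_add_right f qup, zero_add, add_comm ε qup, ← hb]
    rw [h1, h2]
    have hmem : ∀ x ∈ Icc (0:ℝ) ε, x + qlow ∈ Icc 0 ω ∧ x + qup ∈ Icc 0 ω := by
      intro x hx
      constructor
      · exact ⟨by linarith [hx.1], by linarith [hx.2]⟩
      · exact ⟨by linarith [hx.1], by linarith [hx.2]⟩
    refine intervalIntegral.integral_lt_integral_of_continuousOn_of_le_of_exists_lt hεpos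
      ?_ ?_ ?_ ?_
    · refine (hcont.comp (by fun_prop) ?_)
      intro x hx
      simp only [mem_Icc] at hx ⊢
      constructor <;> linarith [hbω, hb]
    · refine (hcont.comp (by fun_prop) ?_)
      intro x hx
      simp only [mem_Icc] at hx ⊢
      constructor <;> linarith [hbω, hb]
    · intro x hx
      obtain ⟨m1, m2⟩ := hmem x ⟨hx.1.le, hx.2⟩
      exact (hmono m1 m2 (by linarith)).le
    · refine ⟨0, ⟨le_rfl, hεpos.le⟩, ?_⟩
      obtain ⟨m1, m2⟩ := hmem 0 ⟨le_rfl, hεpos.le⟩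
      exact hmono m1 m2 (by linarith)
  have hgap : 1 - α < F b - F l := by linarith
  -- F is continuous on [0,1]
  have hFcont : ContinuousOn F (Icc 0 1) := by
    have : ContinuousOn (fun x => ∫ t in (0:ℝ)..x, f t) (Icc 0 1) := by
      have := intervalIntegral.continuousOn_primitive_interval
        (μ := MeasureTheory.volume) (a := (0:ℝ)) (b := 1)
        (f := f) (by rw [uIcc_of_le (by norm_num : (0:ℝ) ≤ 1)]
                     exact hcont.integrableOn_Icc)
      rwa [uIcc_of_le (by norm_num : (0:ℝ) ≤ 1)] at this
    exact this.congr (fun x _ => hF x)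
  -- IVT to find u
  have hsub : Icc l b ⊆ Icc (0:ℝ) 1 := Icc_subset_Icc hl0 hb1
  have hivt := intermediate_value_Icc hlb.le (hFcont.mono hsub)
  have hval : F l + (1 - α) ∈ Icc (F l) (F b) := ⟨by linarith, by linarith⟩
  obtain ⟨u, hu_mem, hu_eq⟩ := hivt hval
  refine ⟨l, u, hl0, ?_, le_trans hu_mem.2 hb1, by linarith, ?_⟩
  · rcases lt_or_eq_of_le hu_mem.1 with h | h
    · exact h
    · exfalso; rw [← h] at hu_eq; linarith
  · have hub : u < b := by
      rcases lt_or_eq_of_le hu_mem.2 with h | h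
      · exact h
      · exfalso; rw [h] at hu_eq; linarith
    simp only [hl, hb] at hub ⊢
    linarith
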